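/- arXiv:0808.1559 — 5 statements merged into one kernel-verified Lean document; each statement's English description precedes it below -/
import Mathlib

section
/- Let N : ℝ → ℝ be differentiable and q : ℝ → ℝ differentiable with q'(s) = N(q(s)) for all s. Fix ε ∈ {1, −1} and c ∈ ℝ, and consider the straight diagonal curve σ(t) = t, ρ(t) = ε·t + c on an open interval I. This curve satisfies the extremal equations σ'' = (1/2)·N'(q(σ))·(ρ'² − σ'²) and ρ'' = −N'(q(σ))·σ'·ρ' on I if and only if N'(q(t)) = 0 for all t ∈ I. In particular, the analogs of lightlike extremals ρ = ±σ + const exist only where the conformal factor is constant along the curve (flat Euclidean metric). -/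
/-- The straight diagonal curve `σ(t) = t`, `ρ(t) = ε·t + c` (with `ε = ±1`),
the analog of a lightlike curve, satisfies the extremal equations of the metric
`ds² = -N(q)(dσ² + dρ²)` on an open interval `I` if and only if
`N'(q(t)) = 0` for all `t ∈ I`, i.e. only for a flat Euclidean metric. -/
theorem lightlike_extremals_only_for_flat_metric
    (N q : ℝ → ℝ)
    (hN : Differentiable ℝ N)
    (hq : Differentiable ℝ q) (hq' : ∀ s, deriv q s = N (q s))
    (ε c : ℝ) (hε : ε = 1 ∨ ε = -1)
    (I : Set ℝ) (hIopen : IsOpen I) (hIconn : IsPreconnected I) :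
    (∀ t ∈ I,
        deriv (deriv (fun s : ℝ => s)) t
          = (1 / 2) * deriv N (q ((fun s : ℝ => s) t)) *
              ((deriv (fun s : ℝ => ε * s + c) t) ^ 2
                - (deriv (fun s : ℝ => s) t) ^ 2) ∧
        deriv (deriv (fun s : ℝ => ε * s + c)) t
          = -(deriv N (q ((fun s : ℝ => s) t)) * deriv (fun s : ℝ => s) t *
              deriv (fun s : ℝ => ε * s + c) t))
      ↔ (∀ t ∈ I, deriv N (q t) = 0) := by
  have hd1 : (deriv (fun s : ℝ => s)) = fun _ : ℝ => (1 : ℝ) := by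
    funext t; simp
  have hd2 : (deriv (fun s : ℝ => ε * s + c)) = fun _ : ℝ => ε := by
    funext t
    rw [deriv_add_const]
    have : deriv (fun s : ℝ => ε * s) t = ε * deriv (fun s : ℝ => s) t :=
      deriv_const_mul ε differentiable_id.differentiableAt
    rw [this]; simp
  have hε2 : ε ^ 2 = 1 := by rcases hε with h | h <;> simp [h]
  have hεne : ε ≠ 0 := by rcases hε with h | h <;> simp [h]
  constructor
  · intro h t ht
    have := (h t ht).2
    rw [hd1, hd2] at this
    simp at this
    rcases this with h0 | h0
    · exact h0
    · exact absurd h0 hεne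
  · intro h t ht
    rw [hd1, hd2]
    constructor
    · simp [hε2]
    · simp [h t ht]
end

section
/- Let N : ℝ → ℝ be differentiable, q : ℝ → ℝ differentiable with q'(s) = N(q(s)) for all s, and let (σ, ρ) be an extremal on an open interval I, i.e. σ'' = (1/2)·N'(q(σ))·(ρ'² − σ'²) and ρ'' = −N'(q(σ))·σ'·ρ' on I. Fix t₀ ∈ I and set C₀ = −N(q(σ(t₀)))·(σ'(t₀)² + ρ'(t₀)²) and C₁ = −N(q(σ(t₀)))·ρ'(t₀), and assume C₁ ≠ 0; set C₂ = C₀/C₁². Then for every t ∈ I: σ'(t)² = ρ'(t)² · (−1 − C₂·N(q(σ(t)))). (This is the trajectory equation (dρ/dσ)² = 1/(−1 − C₂N) for extremals of general type.) -/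
/-!
Along an extremal, `F = N(q(σ))` satisfies `F' = N'(q(σ)) · F · σ'` because `q' = N(q)`.
Substituting the geodesic equations, both `-F ρ'` and `-F (σ'² + ρ'²)` have derivative zero,
so on the connected interval they equal their values `C₁` and `C₀` at `t₀`. Since `C₁ ≠ 0`,
`F ρ' ≠ 0`, and dividing `C₀ = -F (σ'² + ρ'²)` by `C₁² = F² ρ'²` gives the trajectory equation.
-/

theorem IsOpen.is_const_of_hasDerivAt_zero {f : ℝ → ℝ} {s : Set ℝ} (hs : IsOpen s)
    (hs' : IsPreconnected s) (hf : ∀ x ∈ s, HasDerivAt f 0 x) {x y : ℝ} (hx : x ∈ s)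
    (hy : y ∈ s) : f x = f y :=
  hs.is_const_of_deriv_eq_zero hs'
    (fun z hz => (hf z hz).differentiableAt.differentiableWithinAt)
    (fun z hz => (hf z hz).deriv) hx hy

theorem hasDerivAt_comp_of_hasDerivAt_eq_comp {N q σ : ℝ → ℝ} {t : ℝ}
    (hN : DifferentiableAt ℝ N (q (σ t))) (hq : HasDerivAt q (N (q (σ t))) (σ t))
    (hσ : DifferentiableAt ℝ σ t) :
    HasDerivAt (fun t => N (q (σ t))) (deriv N (q (σ t)) * N (q (σ t)) * deriv σ t) t :=
  (hN.hasDerivAt.comp (σ t) hq).comp t hσ.hasDerivAt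

section FirstIntegrals

variable {F u v : ℝ → ℝ} {a t : ℝ}

theorem hasDerivAt_neg_mul_zero (hF : HasDerivAt F (a * F t * u t) t)
    (hv : HasDerivAt v (-(a * u t * v t)) t) :
    HasDerivAt (fun t => -F t * v t) 0 t :=
  (hF.neg.mul hv).congr_deriv (by simp only [Pi.neg_apply]; ring)

theorem hasDerivAt_neg_mul_sq_add_sq_zero (hF : HasDerivAt F (a * F t * u t) t)
    (hu : HasDerivAt u (1 / 2 * a * (v t ^ 2 - u t ^ 2)) t)
    (hv : HasDerivAt v (-(a * u t * v t)) t) :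
    HasDerivAt (fun t => -F t * (u t ^ 2 + v t ^ 2)) 0 t :=
  (hF.neg.mul ((hu.pow 2).add (hv.pow 2))).congr_deriv (by
    simp only [Pi.neg_apply, Pi.add_apply, Pi.pow_apply]; ring)

end FirstIntegrals

theorem sq_eq_sq_mul_of_first_integrals {n u v C₀ C₁ : ℝ} (hC₀ : -n * (u ^ 2 + v ^ 2) = C₀)
    (hC₁ : -n * v = C₁) (hC₁ne : C₁ ≠ 0) :
    u ^ 2 = v ^ 2 * (-1 - C₀ / C₁ ^ 2 * n) := by
  subst hC₀ hC₁
  have hn : n ≠ 0 := by rintro rfl; simp at hC₁ne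
  have hv : v ≠ 0 := by rintro rfl; simp at hC₁ne
  field_simp
  ring

theorem trajectory_equation_general_type_general
    (N q σ ρ : ℝ → ℝ) (I : Set ℝ) (hIopen : IsOpen I) (hIconn : IsPreconnected I)
    (hN : Differentiable ℝ N)
    (hq : Differentiable ℝ q) (hq' : ∀ s, deriv q s = N (q s))
    (hσ : ∀ t ∈ I, DifferentiableAt ℝ σ t)
    (hσ' : ∀ t ∈ I, DifferentiableAt ℝ (deriv σ) t)
    (hρ' : ∀ t ∈ I, DifferentiableAt ℝ (deriv ρ) t)
    (hext1 : ∀ t ∈ I, deriv (deriv σ) t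
      = (1 / 2) * deriv N (q (σ t)) * ((deriv ρ t) ^ 2 - (deriv σ t) ^ 2))
    (hext2 : ∀ t ∈ I, deriv (deriv ρ) t
      = -(deriv N (q (σ t)) * deriv σ t * deriv ρ t))
    (t₀ : ℝ) (ht₀ : t₀ ∈ I) (C₀ C₁ : ℝ)
    (hC₀ : C₀ = -(N (q (σ t₀))) * ((deriv σ t₀) ^ 2 + (deriv ρ t₀) ^ 2))
    (hC₁ : C₁ = -(N (q (σ t₀))) * deriv ρ t₀)
    (hC₁ne : C₁ ≠ 0) :
    ∀ t ∈ I, (deriv σ t) ^ 2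
      = (deriv ρ t) ^ 2 * (-1 - (C₀ / C₁ ^ 2) * N (q (σ t))) := by
  have hF (t : ℝ) (ht : t ∈ I) := hasDerivAt_comp_of_hasDerivAt_eq_comp (hN _)
    (hq' (σ t) ▸ (hq (σ t)).hasDerivAt) (hσ t ht)
  have hσ'' (t : ℝ) (ht : t ∈ I) := hext1 t ht ▸ (hσ' t ht).hasDerivAt
  have hρ'' (t : ℝ) (ht : t ∈ I) := hext2 t ht ▸ (hρ' t ht).hasDerivAt
  intro t ht
  refine sq_eq_sq_mul_of_first_integrals ?_ ?_ hC₁ne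
  · rw [hC₀]
    exact hIopen.is_const_of_hasDerivAt_zero hIconn
      (fun s hs => hasDerivAt_neg_mul_sq_add_sq_zero (hF s hs) (hσ'' s hs) (hρ'' s hs)) ht ht₀
  · rw [hC₁]
    exact hIopen.is_const_of_hasDerivAt_zero hIconn
      (fun s hs => hasDerivAt_neg_mul_zero (hF s hs) (hρ'' s hs)) ht ht₀

/-- Along an extremal of the metric `ds² = -N(q)(dσ² + dρ²)` with first
integrals `C₀ = -N(q(σ))(σ'² + ρ'²)` and `C₁ = -N(q(σ))ρ' ≠ 0` evaluated at a
base point `t₀`, and `C₂ = C₀/C₁²`, the trajectory equation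
`σ'² = ρ'²·(-1 - C₂·N(q(σ)))` holds at every point of the interval
(the equation `(dρ/dσ)² = 1/(-1 - C₂N)` for extremals of general type). -/
theorem trajectory_equation_general_type
    (N q σ ρ : ℝ → ℝ) (I : Set ℝ) (hIopen : IsOpen I) (hIconn : IsPreconnected I)
    (hN : Differentiable ℝ N)
    (hq : Differentiable ℝ q) (hq' : ∀ s, deriv q s = N (q s))
    (hσ : ∀ t ∈ I, DifferentiableAt ℝ σ t)
    (hσ' : ∀ t ∈ I, DifferentiableAt ℝ (deriv σ) t)
    (hρ : ∀ t ∈ I, DifferentiableAt ℝ ρ t)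
    (hρ' : ∀ t ∈ I, DifferentiableAt ℝ (deriv ρ) t)
    (hext1 : ∀ t ∈ I, deriv (deriv σ) t
      = (1 / 2) * deriv N (q (σ t)) * ((deriv ρ t) ^ 2 - (deriv σ t) ^ 2))
    (hext2 : ∀ t ∈ I, deriv (deriv ρ) t
      = -(deriv N (q (σ t)) * deriv σ t * deriv ρ t))
    (t₀ : ℝ) (ht₀ : t₀ ∈ I) (C₀ C₁ : ℝ)
    (hC₀ : C₀ = -(N (q (σ t₀))) * ((deriv σ t₀) ^ 2 + (deriv ρ t₀) ^ 2))
    (hC₁ : C₁ = -(N (q (σ t₀))) * deriv ρ t₀)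
    (hC₁ne : C₁ ≠ 0) :
    ∀ t ∈ I, (deriv σ t) ^ 2
      = (deriv ρ t) ^ 2 * (-1 - (C₀ / C₁ ^ 2) * N (q (σ t))) :=
  trajectory_equation_general_type_general N q σ ρ I hIopen hIconn hN hq hq' hσ hσ' hρ' hext1 hext2
    t₀ ht₀ C₀ C₁ hC₀ hC₁ hC₁ne
end

section
/- Let N : ℝ → ℝ be differentiable, q : ℝ → ℝ differentiable with q'(s) = N(q(s)) for all s, and let (σ, ρ) be an extremal on an open interval I, i.e. σ'' = (1/2)·N'(q(σ))·(ρ'² − σ'²) and ρ'' = −N'(q(σ))·σ'·ρ' on I. Fix t₀ ∈ I and set C₀ = −N(q(σ(t₀)))·(σ'(t₀)² + ρ'(t₀)²) and C₁ = −N(q(σ(t₀)))·ρ'(t₀). Then for every t ∈ I: (−C₀)·N(q(σ(t))) ≥ C₁². (Hence, when C₁ ≠ 0, an extremal of general type cannot leave the region where N(q) ≥ −1/C₂ with C₂ = C₀/C₁², which forces the oscillating behavior between turning points.) -/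
/-!
Both first integrals `C₀ = -N(q(σ))(σ'² + ρ'²)` and `C₁ = -N(q(σ))ρ'` have vanishing derivative
along an extremal (using `q' = N(q)`), so they are constant on the connected interval `I`.
At every point `t`, `-C₀ · N(q(σ t)) = N² (σ'² + ρ'²) ≥ N² ρ'² = C₁²`.
-/

theorem IsPreconnected.eq_of_hasDerivAt_zero {E : Type*} [NormedAddCommGroup E] [NormedSpace ℝ E]
    {s : Set ℝ} (hs : IsPreconnected s) {f : ℝ → E} (hf : ∀ t ∈ s, HasDerivAt f 0 t)
    {x y : ℝ} (hx : x ∈ s) (hy : y ∈ s) : f x = f y := by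
  have h := hs.convex.norm_image_sub_le_of_norm_hasDerivWithin_le (C := 0)
    (fun t ht => (hf t ht).hasDerivWithinAt) (fun _ _ => norm_zero.le) hx hy
  rw [zero_mul, norm_le_zero_iff, sub_eq_zero] at h
  exact h.symm

noncomputable def extremalEnergy (N q σ ρ : ℝ → ℝ) (t : ℝ) : ℝ :=
  -N (q (σ t)) * (deriv σ t ^ 2 + deriv ρ t ^ 2)

noncomputable def extremalMomentum (N q σ ρ : ℝ → ℝ) (t : ℝ) : ℝ :=
  -N (q (σ t)) * deriv ρ t

section Extremal

variable {N q σ ρ : ℝ → ℝ} {t : ℝ}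

theorem hasDerivAt_conformalFactor (hN : DifferentiableAt ℝ N (q (σ t)))
    (hq : HasDerivAt q (N (q (σ t))) (σ t)) (hσ : DifferentiableAt ℝ σ t) :
    HasDerivAt (fun s => N (q (σ s))) (deriv N (q (σ t)) * N (q (σ t)) * deriv σ t) t :=
  (hN.hasDerivAt.comp _ hq).comp _ hσ.hasDerivAt

theorem hasDerivAt_extremalMomentum (hN : DifferentiableAt ℝ N (q (σ t)))
    (hq : HasDerivAt q (N (q (σ t))) (σ t)) (hσ : DifferentiableAt ℝ σ t)
    (hρ' : DifferentiableAt ℝ (deriv ρ) t)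
    (hext2 : deriv (deriv ρ) t = -(deriv N (q (σ t)) * deriv σ t * deriv ρ t)) :
    HasDerivAt (extremalMomentum N q σ ρ) 0 t := by
  refine ((hasDerivAt_conformalFactor hN hq hσ).neg.mul hρ'.hasDerivAt).congr_deriv ?_
  simp only [Pi.neg_apply]
  rw [hext2]
  ring

theorem hasDerivAt_extremalEnergy (hN : DifferentiableAt ℝ N (q (σ t)))
    (hq : HasDerivAt q (N (q (σ t))) (σ t)) (hσ : DifferentiableAt ℝ σ t)
    (hσ' : DifferentiableAt ℝ (deriv σ) t) (hρ' : DifferentiableAt ℝ (deriv ρ) t)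
    (hext1 : deriv (deriv σ) t
      = (1 / 2) * deriv N (q (σ t)) * ((deriv ρ t) ^ 2 - (deriv σ t) ^ 2))
    (hext2 : deriv (deriv ρ) t = -(deriv N (q (σ t)) * deriv σ t * deriv ρ t)) :
    HasDerivAt (extremalEnergy N q σ ρ) 0 t := by
  refine ((hasDerivAt_conformalFactor hN hq hσ).neg.mul
    ((hσ'.hasDerivAt.pow 2).add (hρ'.hasDerivAt.pow 2))).congr_deriv ?_
  simp only [Pi.neg_apply, Pi.add_apply, Pi.pow_apply]
  rw [hext1, hext2]
  ring

theorem extremalMomentum_sq_le (N q σ ρ : ℝ → ℝ) (t : ℝ) :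
    extremalMomentum N q σ ρ t ^ 2 ≤ -extremalEnergy N q σ ρ t * N (q (σ t)) := by
  unfold extremalMomentum extremalEnergy
  nlinarith [sq_nonneg (N (q (σ t)) * deriv σ t)]

end Extremal

theorem extremal_confined_region_general
    (N q σ ρ : ℝ → ℝ) (I : Set ℝ) (hIconn : IsPreconnected I)
    (hN : Differentiable ℝ N)
    (hq : Differentiable ℝ q) (hq' : ∀ s, deriv q s = N (q s))
    (hσ : ∀ t ∈ I, DifferentiableAt ℝ σ t)
    (hσ' : ∀ t ∈ I, DifferentiableAt ℝ (deriv σ) t)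
    (hρ' : ∀ t ∈ I, DifferentiableAt ℝ (deriv ρ) t)
    (hext1 : ∀ t ∈ I, deriv (deriv σ) t
      = (1 / 2) * deriv N (q (σ t)) * ((deriv ρ t) ^ 2 - (deriv σ t) ^ 2))
    (hext2 : ∀ t ∈ I, deriv (deriv ρ) t
      = -(deriv N (q (σ t)) * deriv σ t * deriv ρ t))
    (t₀ : ℝ) (ht₀ : t₀ ∈ I) (C₀ C₁ : ℝ)
    (hC₀ : C₀ = -(N (q (σ t₀))) * ((deriv σ t₀) ^ 2 + (deriv ρ t₀) ^ 2))
    (hC₁ : C₁ = -(N (q (σ t₀))) * deriv ρ t₀) :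
    ∀ t ∈ I, C₁ ^ 2 ≤ (-C₀) * N (q (σ t)) := by
  have hflow : ∀ s, HasDerivAt q (N (q s)) s := fun s => hq' s ▸ (hq s).hasDerivAt
  have hC₀_eq : ∀ t ∈ I, C₀ = extremalEnergy N q σ ρ t := fun t ht =>
    hC₀.trans <| hIconn.eq_of_hasDerivAt_zero (fun s hs => hasDerivAt_extremalEnergy (hN _)
      (hflow _) (hσ s hs) (hσ' s hs) (hρ' s hs) (hext1 s hs) (hext2 s hs)) ht₀ ht
  have hC₁_eq : ∀ t ∈ I, C₁ = extremalMomentum N q σ ρ t := fun t ht =>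
    hC₁.trans <| hIconn.eq_of_hasDerivAt_zero (fun s hs => hasDerivAt_extremalMomentum (hN _)
      (hflow _) (hσ s hs) (hρ' s hs) (hext2 s hs)) ht₀ ht
  intro t ht
  rw [hC₀_eq t ht, hC₁_eq t ht]
  exact extremalMomentum_sq_le N q σ ρ t

/-- Along an extremal of the metric `ds² = -N(q)(dσ² + dρ²)` with first
integrals `C₀ = -N(q(σ))(σ'² + ρ'²)` and `C₁ = -N(q(σ))ρ'` evaluated at a base
point `t₀`, the inequality `(-C₀)·N(q(σ(t))) ≥ C₁²` holds at every point of the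
interval; hence an extremal of general type cannot leave the region where
`N(q) ≥ -1/C₂`, `C₂ = C₀/C₁²`, which forces oscillation between turning points. -/
theorem extremal_confined_region
    (N q σ ρ : ℝ → ℝ) (I : Set ℝ) (hIopen : IsOpen I) (hIconn : IsPreconnected I)
    (hN : Differentiable ℝ N)
    (hq : Differentiable ℝ q) (hq' : ∀ s, deriv q s = N (q s))
    (hσ : ∀ t ∈ I, DifferentiableAt ℝ σ t)
    (hσ' : ∀ t ∈ I, DifferentiableAt ℝ (deriv σ) t)
    (hρ : ∀ t ∈ I, DifferentiableAt ℝ ρ t)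
    (hρ' : ∀ t ∈ I, DifferentiableAt ℝ (deriv ρ) t)
    (hext1 : ∀ t ∈ I, deriv (deriv σ) t
      = (1 / 2) * deriv N (q (σ t)) * ((deriv ρ t) ^ 2 - (deriv σ t) ^ 2))
    (hext2 : ∀ t ∈ I, deriv (deriv ρ) t
      = -(deriv N (q (σ t)) * deriv σ t * deriv ρ t))
    (t₀ : ℝ) (ht₀ : t₀ ∈ I) (C₀ C₁ : ℝ)
    (hC₀ : C₀ = -(N (q (σ t₀))) * ((deriv σ t₀) ^ 2 + (deriv ρ t₀) ^ 2))
    (hC₁ : C₁ = -(N (q (σ t₀))) * deriv ρ t₀) :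
    ∀ t ∈ I, C₁ ^ 2 ≤ (-C₀) * N (q (σ t)) :=
  extremal_confined_region_general N q σ ρ I hIconn hN hq hq' hσ hσ' hρ' hext1 hext2 t₀ ht₀ C₀ C₁
    hC₀ hC₁
end

section
/- Let N : ℝ → ℝ be differentiable, q : ℝ → ℝ differentiable with q'(s) = N(q(s)) for all s, let C₂ < 0 and ε ∈ {1, −1}. Suppose σ, ρ : ℝ → ℝ are differentiable on an open interval I and satisfy, for all t ∈ I: N(q(σ(t))) > 0, −1 − C₂·N(q(σ(t))) > 0, σ'(t) = ε·√(−1 − C₂·N(q(σ(t))))/N(q(σ(t))), and ρ'(t) = 1/N(q(σ(t))). Then σ and ρ are twice differentiable on I and (σ, ρ) satisfies the extremal equations σ'' = (1/2)·N'(q(σ))·(ρ'² − σ'²) and ρ'' = −N'(q(σ))·σ'·ρ'. (These are the extremals of general type with canonical parameter fixed by ρ' = 1/N.) -/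
/-! With `F = N ∘ q` and `g = ε √(-1 - C₂ F) / F`, the hypotheses say `σ' = g(σ)` and
`ρ' = 1/F(σ)` near every point of `I`, so the chain rule gives `σ'' = g'(σ) σ'` and
`ρ'' = (1/F)'(σ) σ'`. Since `q' = N(q)`, we have `F' = N'(q) F`, and both extremal equations
become algebraic identities, using `(√(-1 - C₂ F))² = -1 - C₂ F` and `ε² = 1`. -/

open Filter Topology

theorem hasDerivAt_deriv_of_eventually_deriv_eq_comp {u v φ : ℝ → ℝ} {t φ' : ℝ}
    (hu : DifferentiableAt ℝ u t) (hφ : HasDerivAt φ φ' (u t))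
    (hv : ∀ᶠ s in 𝓝 t, deriv v s = φ (u s)) :
    HasDerivAt (deriv v) (φ' * deriv u t) t :=
  (hφ.comp t hu.hasDerivAt).congr_of_eventuallyEq hv

theorem hasDerivAt_comp_of_deriv_eq_comp {N q : ℝ → ℝ} {x : ℝ}
    (hN : DifferentiableAt ℝ N (q x)) (hq : DifferentiableAt ℝ q x)
    (hq' : deriv q x = N (q x)) :
    HasDerivAt (fun x => N (q x)) (deriv N (q x) * N (q x)) x := by
  have h := hN.hasDerivAt.comp x hq.hasDerivAt
  rwa [hq'] at h

theorem hasDerivAt_sqrt_div {F : ℝ → ℝ} {a C x : ℝ} (hF : HasDerivAt F (a * F x) x)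
    (hFx : F x ≠ 0) (hG : 0 < -1 - C * F x) :
    HasDerivAt (fun x => √(-1 - C * F x) / F x)
      (a * (2 + C * F x) / (2 * √(-1 - C * F x) * F x)) x := by
  have hS : √(-1 - C * F x) ≠ 0 := (Real.sqrt_pos.mpr hG).ne'
  refine ((((hF.const_mul C).const_sub (-1)).sqrt hG.ne').div hF hFx).congr_deriv ?_
  field_simp
  linear_combination (-2 * a) * Real.sq_sqrt hG.le

theorem general_type_curves_are_extremals_general
    (N q σ ρ : ℝ → ℝ)
    (hN : Differentiable ℝ N)
    (hq : Differentiable ℝ q) (hq' : ∀ s, deriv q s = N (q s))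
    (C₂ : ℝ) (ε : ℝ) (hε : ε = 1 ∨ ε = -1)
    (I : Set ℝ) (hIopen : IsOpen I)
    (hσ : ∀ t ∈ I, DifferentiableAt ℝ σ t)
    (hNpos : ∀ t ∈ I, 0 < N (q (σ t)))
    (hroot : ∀ t ∈ I, 0 < -1 - C₂ * N (q (σ t)))
    (hσ' : ∀ t ∈ I, deriv σ t
      = ε * Real.sqrt (-1 - C₂ * N (q (σ t))) / N (q (σ t)))
    (hρ' : ∀ t ∈ I, deriv ρ t = 1 / N (q (σ t))) :
    (∀ t ∈ I, DifferentiableAt ℝ (deriv σ) t ∧ DifferentiableAt ℝ (deriv ρ) t) ∧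
    (∀ t ∈ I,
      deriv (deriv σ) t
        = (1 / 2) * deriv N (q (σ t)) * ((deriv ρ t) ^ 2 - (deriv σ t) ^ 2) ∧
      deriv (deriv ρ) t
        = -(deriv N (q (σ t)) * deriv σ t * deriv ρ t)) := by
  have hF x : HasDerivAt (fun x => N (q x)) (deriv N (q x) * N (q x)) x :=
    hasDerivAt_comp_of_deriv_eq_comp (hN _) (hq x) (hq' x)
  have hσ'' t (ht : t ∈ I) := hasDerivAt_deriv_of_eventually_deriv_eq_comp (hσ t ht)
    ((hasDerivAt_sqrt_div (hF _) (hNpos t ht).ne' (hroot t ht)).const_mul ε)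
    (eventually_of_mem (hIopen.mem_nhds ht) fun s hs => by rw [hσ' s hs, mul_div_assoc])
  have hρ'' t (ht : t ∈ I) := hasDerivAt_deriv_of_eventually_deriv_eq_comp (v := ρ) (hσ t ht)
    ((hasDerivAt_const _ 1).div (hF _) (hNpos t ht).ne')
    (eventually_of_mem (hIopen.mem_nhds ht) hρ')
  refine ⟨fun t ht => ⟨(hσ'' t ht).differentiableAt, (hρ'' t ht).differentiableAt⟩,
    fun t ht => ⟨?_, ?_⟩⟩
  · have hε2 : ε ^ 2 = 1 := by rcases hε with rfl | rfl <;> norm_num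
    have hS : √(-1 - C₂ * N (q (σ t))) ≠ 0 := (Real.sqrt_pos.mpr (hroot t ht)).ne'
    have hFt := (hNpos t ht).ne'
    rw [(hσ'' t ht).deriv, hρ' t ht, hσ' t ht]
    field_simp
    linear_combination (ε ^ 2 * deriv N (q (σ t))) * Real.sq_sqrt (hroot t ht).le
      + deriv N (q (σ t)) * hε2
  · have hFt := (hNpos t ht).ne'
    rw [(hρ'' t ht).deriv, hρ' t ht]
    field_simp
    ring

/-- Extremals of general type: if `σ' = ε·√(-1 - C₂·N(q(σ)))/N(q(σ))` and
`ρ' = 1/N(q(σ))` on an open interval `I` (with `C₂ < 0`, `ε = ±1`,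
`N(q(σ)) > 0` and `-1 - C₂·N(q(σ)) > 0` on `I`), then `σ` and `ρ` are twice
differentiable on `I` and `(σ, ρ)` satisfies the extremal equations of the
metric `ds² = -N(q)(dσ² + dρ²)`. -/
theorem general_type_curves_are_extremals
    (N q σ ρ : ℝ → ℝ)
    (hN : Differentiable ℝ N)
    (hq : Differentiable ℝ q) (hq' : ∀ s, deriv q s = N (q s))
    (C₂ : ℝ) (hC₂ : C₂ < 0) (ε : ℝ) (hε : ε = 1 ∨ ε = -1)
    (I : Set ℝ) (hIopen : IsOpen I) (hIconn : IsPreconnected I)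
    (hσ : ∀ t ∈ I, DifferentiableAt ℝ σ t)
    (hρ : ∀ t ∈ I, DifferentiableAt ℝ ρ t)
    (hNpos : ∀ t ∈ I, 0 < N (q (σ t)))
    (hroot : ∀ t ∈ I, 0 < -1 - C₂ * N (q (σ t)))
    (hσ' : ∀ t ∈ I, deriv σ t
      = ε * Real.sqrt (-1 - C₂ * N (q (σ t))) / N (q (σ t)))
    (hρ' : ∀ t ∈ I, deriv ρ t = 1 / N (q (σ t))) :
    (∀ t ∈ I, DifferentiableAt ℝ (deriv σ) t ∧ DifferentiableAt ℝ (deriv ρ) t) ∧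
    (∀ t ∈ I,
      deriv (deriv σ) t
        = (1 / 2) * deriv N (q (σ t)) * ((deriv ρ t) ^ 2 - (deriv σ t) ^ 2) ∧
      deriv (deriv ρ) t
        = -(deriv N (q (σ t)) * deriv σ t * deriv ρ t)) :=
  general_type_curves_are_extremals_general N q σ ρ hN hq hq' C₂ ε hε I hIopen hσ hNpos hroot hσ'
    hρ'
end

section
/- Let N : ℝ → ℝ be differentiable, q : ℝ → ℝ differentiable with q'(s) = N(q(s)) for all s. Suppose σ : ℝ → ℝ is differentiable on an open interval I with N(q(σ(t))) > 0 and σ'(t) = 1/√(N(q(σ(t)))) for all t ∈ I, and let ρ be a constant function. Then σ is twice differentiable and the curve (σ, ρ) satisfies the extremal equations σ'' = (1/2)·N'(q(σ))·(ρ'² − σ'²) and ρ'' = −N'(q(σ))·σ'·ρ'. (These are the straight extremals parallel to the σ axis, passing through every point ρ = const.) -/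
/-!
On `I` the curve solves the autonomous equation `σ' = F(σ)` with `F = 1/√(N ∘ q)`, so
`σ'' = F'(σ) F(σ)`. Since `(N ∘ q)' = N'(q) N(q)`, this equals `-N'(q(σ)) / (2 N(q(σ)))`,
which is the first extremal equation because `ρ' = 0` and `σ'² = 1/N(q(σ))`; the second
equation holds trivially for constant `ρ`.
-/

open Filter Topology

theorem hasDerivAt_deriv_of_deriv_eventuallyEq_comp {𝕜 : Type*} [NontriviallyNormedField 𝕜]
    {σ F : 𝕜 → 𝕜} {t F' : 𝕜} (hF : HasDerivAt F F' (σ t))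
    (hσ : DifferentiableAt 𝕜 σ t) (hσ' : deriv σ =ᶠ[𝓝 t] F ∘ σ) :
    HasDerivAt (deriv σ) (F' * F (σ t)) t := by
  have hσt : HasDerivAt σ (F (σ t)) t := by
    simpa [hσ'.self_of_nhds] using hσ.hasDerivAt
  exact (hF.comp t hσt).congr_of_eventuallyEq hσ'

theorem HasDerivAt.one_div_sqrt {f : ℝ → ℝ} {f' x : ℝ} (hf : HasDerivAt f f' x)
    (hx : 0 < f x) :
    HasDerivAt (fun s => 1 / √(f s)) (-f' / (2 * f x * √(f x))) x := by
  have hinv : HasDerivAt (fun s => (√(f s))⁻¹) (-(f' / (2 * √(f x))) / √(f x) ^ 2) x :=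
    (hf.sqrt hx.ne').inv (Real.sqrt_pos.2 hx).ne'
  simp only [one_div]
  refine hinv.congr_deriv ?_
  rw [Real.sq_sqrt hx.le]
  field_simp

theorem straight_sigma_curves_are_extremals_general
    (N q σ ρ : ℝ → ℝ)
    (hN : Differentiable ℝ N)
    (hq : Differentiable ℝ q) (hq' : ∀ s, deriv q s = N (q s))
    (I : Set ℝ) (hIopen : IsOpen I)
    (hσ : ∀ t ∈ I, DifferentiableAt ℝ σ t)
    (hNpos : ∀ t ∈ I, 0 < N (q (σ t)))
    (hσ' : ∀ t ∈ I, deriv σ t = 1 / Real.sqrt (N (q (σ t))))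
    (r : ℝ) (hρ : ρ = fun _ => r) :
    (∀ t ∈ I, DifferentiableAt ℝ (deriv σ) t) ∧
    (∀ t ∈ I,
      deriv (deriv σ) t
        = (1 / 2) * deriv N (q (σ t)) * ((deriv ρ t) ^ 2 - (deriv σ t) ^ 2) ∧
      deriv (deriv ρ) t
        = -(deriv N (q (σ t)) * deriv σ t * deriv ρ t)) := by
  subst hρ
  have hNq : ∀ s, HasDerivAt (fun s => N (q s)) (deriv N (q s) * N (q s)) s := fun s =>
    (hN (q s)).hasDerivAt.comp s (hq' s ▸ (hq s).hasDerivAt)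
  have hσσ : ∀ t ∈ I, HasDerivAt (deriv σ)
      (-(deriv N (q (σ t)) * N (q (σ t))) / (2 * N (q (σ t)) * √(N (q (σ t))))
        * (1 / √(N (q (σ t))))) t := fun t ht =>
    hasDerivAt_deriv_of_deriv_eventuallyEq_comp ((hNq (σ t)).one_div_sqrt (hNpos t ht)) (hσ t ht)
      (eventually_of_mem (hIopen.mem_nhds ht) hσ')
  refine ⟨fun t ht => (hσσ t ht).differentiableAt, fun t ht => ⟨?_, by simp⟩⟩
  have hpos := hNpos t ht
  rw [(hσσ t ht).deriv, hσ' t ht, deriv_const, div_pow, Real.sq_sqrt hpos.le]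
  field_simp
  rw [Real.sq_sqrt hpos.le]
  ring

/-- Straight extremals parallel to the `σ` axis: if `σ' = 1/√(N(q(σ)))` on an
open interval `I` with `N(q(σ)) > 0`, and `ρ` is a constant function, then `σ`
is twice differentiable on `I` and the curve `(σ, ρ)` satisfies the extremal
equations of the metric `ds² = -N(q)(dσ² + dρ²)`. -/
theorem straight_sigma_curves_are_extremals
    (N q σ ρ : ℝ → ℝ)
    (hN : Differentiable ℝ N)
    (hq : Differentiable ℝ q) (hq' : ∀ s, deriv q s = N (q s))
    (I : Set ℝ) (hIopen : IsOpen I) (hIconn : IsPreconnected I)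
    (hσ : ∀ t ∈ I, DifferentiableAt ℝ σ t)
    (hNpos : ∀ t ∈ I, 0 < N (q (σ t)))
    (hσ' : ∀ t ∈ I, deriv σ t = 1 / Real.sqrt (N (q (σ t))))
    (r : ℝ) (hρ : ρ = fun _ => r) :
    (∀ t ∈ I, DifferentiableAt ℝ (deriv σ) t) ∧
    (∀ t ∈ I,
      deriv (deriv σ) t
        = (1 / 2) * deriv N (q (σ t)) * ((deriv ρ t) ^ 2 - (deriv σ t) ^ 2) ∧
      deriv (deriv ρ) t
        = -(deriv N (q (σ t)) * deriv σ t * deriv ρ t)) :=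
  straight_sigma_curves_are_extremals_general N q σ ρ hN hq hq' I hIopen hσ hNpos hσ' r hρ
end
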